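/- Fix σ > 1/2 and let g : ℝ → ℝ satisfy g(T) > T for all large T. Assume: (i) (quotient formula) ∫_T^{g(T)} |ζ(1/2+it)|² dt / ∫_T^{g(T)} |ζ(σ+it)|² dt = (1/ζ(2σ))·ln T + O(1) as T → ∞; (ii) (t_ν) is a Gram sequence satisfying the second Moser asymptotic. For positive integers x, y, z, n with n ≥ 3 set F = (xⁿ + yⁿ)/zⁿ and K_F = 4π³·F/ζ(2σ)⁵, and let E(τ) = (1/τ)·(∫_{K_F·τ}^{g(K_F·τ)} |ζ(σ+it)|² dt)⁵ · (∫_{K_F·τ}^{g(K_F·τ)} |ζ(1/2+it)|² dt)^{−5} · Σ_{ν : K_F·τ ≤ t_ν ≤ 2·K_F·τ} |ζ(1/2 + i t_ν)|⁴. Then the following are equivalent: (a) for all positive integers x, y, z, n with n ≥ 3, E(τ) does not converge to 1 as τ → ∞; (b) for all positive integers x, y, z, n with n ≥ 3, xⁿ + yⁿ ≠ zⁿ (the Fermat–Wiles theorem). -/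

import Mathlib

open Filter Topology MeasureTheory

/-- |ζ(σ+it)|² -/
noncomputable def zsq (σ : ℝ) (t : ℝ) : ℝ :=
  ‖riemannZeta (↑σ + ↑t * Complex.I)‖ ^ 2

/-- Riemann–Siegel theta function θ(t) = Im log Γ(1/4 + it/2) − (t/2)·ln π. -/
noncomputable def RStheta (t : ℝ) : ℝ :=
  (Complex.log (Complex.Gamma (1/4 + (↑t/2) * Complex.I))).im - (t/2) * Real.log Real.pi

/-- A Gram sequence: strictly increasing positive reals tending to ∞ with θ(t_ν) = π·ν. -/
def IsGramSeq (tν : ℕ → ℝ) : Prop :=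
  StrictMono tν ∧ (∀ ν : ℕ, 1 ≤ ν → 0 < tν ν) ∧ Filter.Tendsto tν Filter.atTop Filter.atTop ∧
    ∀ ν : ℕ, 1 ≤ ν → RStheta (tν ν) = Real.pi * ν

/-- The sum Σ_{T ≤ t_ν ≤ 2T} |ζ(1/2+it_ν)|⁴. -/
noncomputable def MoserSum (tν : ℕ → ℝ) (T : ℝ) : ℝ :=
  ∑' ν : ℕ, if T ≤ tν ν ∧ tν ν ≤ 2 * T
    then ‖riemannZeta (1/2 + ↑(tν ν) * Complex.I)‖ ^ 4 else 0

/-- The second Moser asymptotic (1991):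
Σ_{T ≤ t_ν ≤ 2T} |ζ(1/2+it_ν)|⁴ = (1/(4π³))·T·ln⁵T·(1+O(1/ln T)). -/
def MoserAsymp (tν : ℕ → ℝ) : Prop :=
  ∃ C : ℝ, ∀ᶠ T in Filter.atTop,
    |MoserSum tν T / (1 / (4 * Real.pi ^ 3) * T * Real.log T ^ 5) - 1| ≤ C / Real.log T

open Real

/-
Set `T = K_F τ`. Moser's asymptotic says that `Σ |ζ(1/2 + i t_ν)|⁴` over `[T, 2T]` is
`T ln⁵ T / (4π³) · (1 + o(1))`, and the quotient formula that the ratio of the two mean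
values of `|ζ|²` over `[T, g(T)]` is `ln T / ζ(2σ) · (1 + o(1))`. In `E(τ)` the factors
`ln⁵ T` cancel and the constant `K_F` is chosen so that what remains is `F · (1 + o(1))`.
Hence `E(τ) → F`, and `E(τ) → 1` holds exactly when `F = 1`, i.e. when `xⁿ + yⁿ = zⁿ`.
-/

lemma tendsto_of_abs_sub_le_div_atTop {α : Type*} {l : Filter α} {u v : α → ℝ} {a C : ℝ}
    (hv : Tendsto v l atTop) (h : ∀ᶠ x in l, |u x - a| ≤ C / v x) :
    Tendsto u l (𝓝 a) := by
  have hsub : Tendsto (fun x => u x - a) l (𝓝 0) :=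
    squeeze_zero_norm' h (tendsto_const_nhds.div_atTop hv)
  simpa using hsub.add_const a

lemma tendsto_div_of_abs_sub_le {α : Type*} {l : Filter α} {u v : α → ℝ} {C : ℝ}
    (hv : Tendsto v l atTop) (h : ∀ᶠ x in l, |u x - v x| ≤ C) :
    Tendsto (fun x => u x / v x) l (𝓝 1) := by
  refine tendsto_of_abs_sub_le_div_atTop (C := C) hv ?_
  filter_upwards [h, hv.eventually_gt_atTop 0] with x hx hvx
  rw [div_sub_one hvx.ne', abs_div, abs_of_pos hvx]
  gcongr

lemma moser_ratio_eq_mul (F c τ L I₁ I₂ M : ℝ) (hτ : τ ≠ 0) (hL : L ≠ 0) (hc : c ≠ 0)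
    (hF : F ≠ 0) :
    1 / τ * I₂ ^ 5 * (I₁ ^ 5)⁻¹ * M =
      F * (M / (1 / (4 * π ^ 3) * (4 * π ^ 3 * F / c ^ 5 * τ) * L ^ 5)) *
        (((I₁ / I₂) / (1 / c * L)) ^ 5)⁻¹ := by
  have hπ : π ≠ 0 := pi_ne_zero
  rcases eq_or_ne I₁ 0 with rfl | -
  · simp
  rcases eq_or_ne I₂ 0 with rfl | -
  · simp
  field_simp

theorem tendsto_moser_ratio {F c C₁ C₂ : ℝ} (hF : 0 < F) (hc : 0 < c)
    {I₁ I₂ M : ℝ → ℝ}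
    (hquot : ∀ᶠ T in atTop, |I₁ T / I₂ T - 1 / c * log T| ≤ C₂)
    (hmoser : ∀ᶠ T in atTop, |M T / (1 / (4 * π ^ 3) * T * log T ^ 5) - 1| ≤ C₁ / log T) :
    Tendsto (fun τ => 1 / τ * I₂ (4 * π ^ 3 * F / c ^ 5 * τ) ^ 5 *
        (I₁ (4 * π ^ 3 * F / c ^ 5 * τ) ^ 5)⁻¹ * M (4 * π ^ 3 * F / c ^ 5 * τ))
      atTop (𝓝 F) := by
  set K := 4 * π ^ 3 * F / c ^ 5
  have hK : Tendsto (fun τ => K * τ) atTop atTop :=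
    tendsto_id.const_mul_atTop (by positivity)
  have hlog : Tendsto (fun T => 1 / c * log T) atTop atTop :=
    tendsto_log_atTop.const_mul_atTop (by positivity)
  have hmoser' : Tendsto (fun T => M T / (1 / (4 * π ^ 3) * T * log T ^ 5)) atTop (𝓝 1) :=
    tendsto_of_abs_sub_le_div_atTop tendsto_log_atTop hmoser
  have hquot' : Tendsto (fun T => I₁ T / I₂ T / (1 / c * log T)) atTop (𝓝 1) :=
    tendsto_div_of_abs_sub_le hlog hquot
  have hlim := ((tendsto_const_nhds (x := F)).mul (hmoser'.comp hK)).mul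
    (((hquot'.comp hK).pow 5).inv₀ (by norm_num))
  rw [one_pow, inv_one, mul_one, mul_one] at hlim
  refine hlim.congr' ?_
  filter_upwards [eventually_gt_atTop 0, (tendsto_log_atTop.comp hK).eventually_gt_atTop 0]
    with τ hτ hL
  exact (moser_ratio_eq_mul F c τ _ _ _ _ hτ.ne' hL.ne' hc.ne' hF.ne').symm

lemma fermat_rational_eq_one_iff {x y z : ℕ} (n : ℕ) (hz : 0 < z) :
    ((x : ℝ) ^ n + (y : ℝ) ^ n) / (z : ℝ) ^ n = 1 ↔ x ^ n + y ^ n = z ^ n := by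
  rw [div_eq_one_iff_eq (by positivity)]
  exact_mod_cast Iff.rfl

lemma not_tendsto_nhds_iff_ne {α X : Type*} [TopologicalSpace X] [T2Space X] {l : Filter α}
    [l.NeBot] {f : α → X} {a b : X} (h : Tendsto f l (𝓝 a)) :
    ¬ Tendsto f l (𝓝 b) ↔ a ≠ b :=
  not_congr ⟨tendsto_nhds_unique h, fun hab => hab ▸ h⟩

theorem zeta_equivalent_FLT_second_general (σ : ℝ) (hσ : 1/2 < σ) (g : ℝ → ℝ)
    (hquot : ∃ C : ℝ, ∀ᶠ T in atTop,
      |(∫ t in T..(g T), zsq (1/2) t) / (∫ t in T..(g T), zsq σ t) -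
        (1 / (riemannZeta (2 * (σ:ℂ))).re) * Real.log T| ≤ C)
    (tν : ℕ → ℝ) (hmoser : MoserAsymp tν) :
    ((∀ x y z n : ℕ, 0 < x → 0 < y → 0 < z → 3 ≤ n →
      ¬ Tendsto (fun τ : ℝ =>
        (1/τ) *
        ((∫ t in (4 * Real.pi ^ 3 * (((x:ℝ)^n + (y:ℝ)^n) / (z:ℝ)^n) / (riemannZeta (2 * (σ:ℂ))).re ^ 5 * τ)..(g (4 * Real.pi ^ 3 * (((x:ℝ)^n + (y:ℝ)^n) / (z:ℝ)^n) / (riemannZeta (2 * (σ:ℂ))).re ^ 5 * τ)), zsq σ t) ^ 5) *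
        (((∫ t in (4 * Real.pi ^ 3 * (((x:ℝ)^n + (y:ℝ)^n) / (z:ℝ)^n) / (riemannZeta (2 * (σ:ℂ))).re ^ 5 * τ)..(g (4 * Real.pi ^ 3 * (((x:ℝ)^n + (y:ℝ)^n) / (z:ℝ)^n) / (riemannZeta (2 * (σ:ℂ))).re ^ 5 * τ)), zsq (1/2) t) ^ 5)⁻¹) *
        MoserSum tν (4 * Real.pi ^ 3 * (((x:ℝ)^n + (y:ℝ)^n) / (z:ℝ)^n) / (riemannZeta (2 * (σ:ℂ))).re ^ 5 * τ))
        atTop (nhds 1))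
    ↔ (∀ x y z n : ℕ, 0 < x → 0 < y → 0 < z → 3 ≤ n → x^n + y^n ≠ z^n)) := by
  have hc : 0 < (riemannZeta (2 * (σ:ℂ))).re := by
    have h := riemannZeta_re_pos_of_one_lt (x := 2 * σ) (by linarith)
    rwa [Complex.ofReal_mul, Complex.ofReal_ofNat] at h
  obtain ⟨C₁, hC₁⟩ := hmoser
  obtain ⟨C₂, hC₂⟩ := hquot
  refine forall₄_congr fun x y z n => forall₄_congr fun hx _ hz _ => ?_
  have hF : 0 < ((x : ℝ) ^ n + (y : ℝ) ^ n) / (z : ℝ) ^ n := by positivity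
  rw [not_tendsto_nhds_iff_ne (tendsto_moser_ratio hF hc hC₂ hC₁), Ne,
    fermat_rational_eq_one_iff n hz]

theorem zeta_equivalent_FLT_second (σ : ℝ) (hσ : 1/2 < σ) (g : ℝ → ℝ)
    (hg : ∀ᶠ T in atTop, T < g T)
    (hquot : ∃ C : ℝ, ∀ᶠ T in atTop,
      |(∫ t in T..(g T), zsq (1/2) t) / (∫ t in T..(g T), zsq σ t) -
        (1 / (riemannZeta (2 * (σ:ℂ))).re) * Real.log T| ≤ C)
    (tν : ℕ → ℝ) (hgram : IsGramSeq tν) (hmoser : MoserAsymp tν) :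
    ((∀ x y z n : ℕ, 0 < x → 0 < y → 0 < z → 3 ≤ n →
      ¬ Tendsto (fun τ : ℝ =>
        (1/τ) *
        ((∫ t in (4 * Real.pi ^ 3 * (((x:ℝ)^n + (y:ℝ)^n) / (z:ℝ)^n) / (riemannZeta (2 * (σ:ℂ))).re ^ 5 * τ)..(g (4 * Real.pi ^ 3 * (((x:ℝ)^n + (y:ℝ)^n) / (z:ℝ)^n) / (riemannZeta (2 * (σ:ℂ))).re ^ 5 * τ)), zsq σ t) ^ 5) *
        (((∫ t in (4 * Real.pi ^ 3 * (((x:ℝ)^n + (y:ℝ)^n) / (z:ℝ)^n) / (riemannZeta (2 * (σ:ℂ))).re ^ 5 * τ)..(g (4 * Real.pi ^ 3 * (((x:ℝ)^n + (y:ℝ)^n) / (z:ℝ)^n) / (riemannZeta (2 * (σ:ℂ))).re ^ 5 * τ)), zsq (1/2) t) ^ 5)⁻¹) *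
        MoserSum tν (4 * Real.pi ^ 3 * (((x:ℝ)^n + (y:ℝ)^n) / (z:ℝ)^n) / (riemannZeta (2 * (σ:ℂ))).re ^ 5 * τ))
        atTop (nhds 1))
    ↔ (∀ x y z n : ℕ, 0 < x → 0 < y → 0 < z → 3 ≤ n → x^n + y^n ≠ z^n)) :=
  zeta_equivalent_FLT_second_general σ hσ g hquot tν hmoser
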